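/- arXiv:2210.05886 — 2 statements merged into one kernel-verified Lean document; each statement's English description precedes it below -/
import Mathlib

section
/- Let I be the edge ideal of the complete graph K_n in S = k[x₁,…,x_n], localized at m = (x₁,…,x_n). Then I is a set-theoretic complete intersection: there exist n−1 elements whose radical equals √I. In particular √I = √(σ₂,…,σ_n) for the elementary symmetric polynomials σ₂,…,σ_n. -/
open MvPolynomial Polynomial
set_option synthInstance.maxHeartbeats 1000000
set_option maxHeartbeats 1600000

lemma esymm_mem_edge (k : Type) [Field k] (n : ℕ) (j : ℕ) (h2 : 2 ≤ j) :
    MvPolynomial.esymm (Fin n) k j ∈ Ideal.span {m : MvPolynomial (Fin n) k |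
      ∃ i j : Fin n, i < j ∧ m = MvPolynomial.X i * MvPolynomial.X j} := by
  rw [MvPolynomial.esymm]
  apply Ideal.sum_mem
  intro t ht
  rw [Finset.mem_powersetCard] at ht
  have hcard : 1 < t.card := by omega
  obtain ⟨a, ha, b, hb, hab⟩ := Finset.one_lt_card.mp hcard
  have hb' : b ∈ t.erase a := Finset.mem_erase.mpr ⟨fun h => hab h.symm, hb⟩
  have h1 := Finset.mul_prod_erase t (fun i => (MvPolynomial.X i : MvPolynomial (Fin n) k)) ha
  have h2' := Finset.mul_prod_erase (t.erase a) (fun i => (MvPolynomial.X i : MvPolynomial (Fin n) k)) hb'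
  have key : (∏ i ∈ t, (MvPolynomial.X i : MvPolynomial (Fin n) k))
      = (MvPolynomial.X a * MvPolynomial.X b) * ∏ i ∈ (t.erase a).erase b, MvPolynomial.X i := by
    rw [← h1, ← h2']; ring
  rw [key]
  apply Ideal.mul_mem_right
  apply Ideal.subset_span
  rcases lt_or_gt_of_ne hab with h | h
  · exact ⟨a, b, h, rfl⟩
  · exact ⟨b, a, h, mul_comm _ _⟩

lemma vieta_vanish {F : Type*} [Field F] {n : ℕ} (hn2 : 2 ≤ n) (c : Fin n → F)
    (hesymm : ∀ m : ℕ, 2 ≤ m → m ≤ n → (Multiset.map c Finset.univ.val).esymm m = 0)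
    (i j : Fin n) (hij : i ≠ j) : c i * c j = 0 := by
  by_contra hne
  obtain ⟨hci, hcj⟩ := mul_ne_zero_iff.mp hne
  set s : Multiset F := Multiset.map c Finset.univ.val with hs
  have hcard : Multiset.card s = n := by
    rw [hs, Multiset.card_map, ← Finset.card_def, Finset.card_univ, Fintype.card_fin]
  set a : F := s.sum with ha
  have hvieta : (s.map fun t => Polynomial.X - Polynomial.C t).prod
      = Polynomial.X ^ n - Polynomial.C a * Polynomial.X ^ (n - 1) := by
    rw [Multiset.prod_X_sub_X_eq_sum_esymm, hcard]
    have hsub : Finset.range 2 ⊆ Finset.range (n + 1) := by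
      apply Finset.range_subset_range.mpr; omega
    rw [← Finset.sum_subset hsub]
    · rw [Finset.sum_range_succ, Finset.sum_range_one]
      have h0 : s.esymm 0 = 1 := by simp [Multiset.esymm, Multiset.powersetCard_zero_left]
      have h1 : s.esymm 1 = a := by simp [Multiset.esymm, Multiset.powersetCard_one, ha, Multiset.map_map]
      rw [h0, h1]
      simp only [pow_zero, pow_one, Nat.sub_zero, map_one, one_mul, neg_one_mul]
      ring
    · intro x hx hx2
      rw [Finset.mem_range] at hx hx2
      rw [hesymm x (by omega) (by omega)]
      simp
  have hprod : (s.map fun t => Polynomial.X - Polynomial.C t).prod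
      = ∏ m : Fin n, (Polynomial.X - Polynomial.C (c m)) := by
    rw [hs, Multiset.map_map]
    rfl
  have hj' : j ∈ Finset.univ.erase i := Finset.mem_erase.mpr ⟨hij.symm, Finset.mem_univ j⟩
  set q : Polynomial F := ∏ m ∈ (Finset.univ.erase i).erase j,
    (Polynomial.X - Polynomial.C (c m)) with hq
  have hkey : Polynomial.X ^ n - Polynomial.C a * Polynomial.X ^ (n - 1)
      = (Polynomial.X - Polynomial.C (c i)) * ((Polynomial.X - Polynomial.C (c j)) * q) := by
    rw [← hvieta, hprod,
      ← Finset.mul_prod_erase Finset.univ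
        (fun m => Polynomial.X - Polynomial.C (c m)) (Finset.mem_univ i),
      ← Finset.mul_prod_erase (Finset.univ.erase i)
        (fun m => Polynomial.X - Polynomial.C (c m)) hj']
  have hroot : ∀ m : Fin n, c m ^ n - a * c m ^ (n - 1) = 0 → c m ≠ 0 → c m = a := by
    intro m hm hm0
    have hpow : c m ^ n = c m ^ (n - 1) * c m := by
      rw [← pow_succ]
      congr 1
      omega
    rw [hpow] at hm
    have h0 : c m ^ (n - 1) * (c m - a) = 0 := by linear_combination hm
    rcases mul_eq_zero.mp h0 with h | h
    · exact absurd ((pow_eq_zero_iff (show n - 1 ≠ 0 by omega)).mp h) hm0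
    · linear_combination h
  have heval : ∀ m : Fin n, (Polynomial.X ^ n - Polynomial.C a * Polynomial.X ^ (n - 1)
      : Polynomial F).eval (c m) = c m ^ n - a * c m ^ (n - 1) := by
    intro m; simp
  have hi_eq : c i = a := by
    apply hroot i _ hci
    rw [← heval i, hkey]
    simp
  have hj_eq : c j = a := by
    apply hroot j _ hcj
    rw [← heval j, hkey]
    simp
  have hane : a ≠ 0 := hi_eq ▸ hci
  rw [hi_eq, hj_eq] at hkey
  have hlhs : (Polynomial.X ^ n - Polynomial.C a * Polynomial.X ^ (n - 1) : Polynomial F)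
      = (Polynomial.X - Polynomial.C a) * Polynomial.X ^ (n - 1) := by
    have hXn : (Polynomial.X : Polynomial F) ^ n = Polynomial.X ^ (n - 1) * Polynomial.X := by
      rw [← pow_succ]
      congr 1
      omega
    rw [hXn]
    ring
  rw [hlhs] at hkey
  have hXa : (Polynomial.X - Polynomial.C a : Polynomial F) ≠ 0 := Polynomial.X_sub_C_ne_zero a
  have hcancel : (Polynomial.X ^ (n - 1) : Polynomial F)
      = (Polynomial.X - Polynomial.C a) * q := mul_left_cancel₀ hXa hkey
  have hz : (a : F) ^ (n - 1) = 0 := by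
    have := congrArg (Polynomial.eval a) hcancel
    simpa using this
  exact hane ((pow_eq_zero_iff (show n - 1 ≠ 0 by omega)).mp hz)

lemma edge_mem_prime (k : Type) [Field k] (n : ℕ) (P : Ideal (MvPolynomial (Fin n) k))
    (hP : P.IsPrime)
    (hσ : ∀ j : ℕ, 2 ≤ j → j ≤ n → MvPolynomial.esymm (Fin n) k j ∈ P)
    (i j : Fin n) (hij : i < j) : MvPolynomial.X i * MvPolynomial.X j ∈ P := by
  haveI := hP
  have hn2 : 2 ≤ n := by
    have h1 := i.2
    have h2 := j.2
    have h3 : i.1 < j.1 := hij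
    omega
  set D := MvPolynomial (Fin n) k ⧸ P with hD
  set F := FractionRing D with hF
  set φ : MvPolynomial (Fin n) k →+* F :=
    (algebraMap D F).comp (Ideal.Quotient.mk P) with hφ
  set c : Fin n → F := fun m => φ (MvPolynomial.X m) with hc
  have hes : ∀ m : ℕ, 2 ≤ m → m ≤ n → (Multiset.map c Finset.univ.val).esymm m = 0 := by
    intro m h2 hn'
    rw [Finset.esymm_map_val]
    have h0 : φ (MvPolynomial.esymm (Fin n) k m) = 0 := by
      rw [hφ, RingHom.comp_apply, Ideal.Quotient.eq_zero_iff_mem.mpr (hσ m h2 hn'), map_zero]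
    rw [MvPolynomial.esymm, map_sum] at h0
    simpa [map_prod] using h0
  have hv := vieta_vanish hn2 c hes i j (ne_of_lt hij)
  have h0 : φ (MvPolynomial.X i * MvPolynomial.X j) = 0 := by
    rw [map_mul]; exact hv
  rw [hφ, RingHom.comp_apply] at h0
  have hmk : Ideal.Quotient.mk P (MvPolynomial.X i * MvPolynomial.X j) = 0 := by
    apply IsFractionRing.injective D F
    rw [h0, map_zero]
  exact Ideal.Quotient.eq_zero_iff_mem.mp hmk

/-- The edge ideal `I` of the complete graph `K_n` is a set-theoretic
complete intersection: there are `n − 1` elements whose span has the same radical as `I`; in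
particular `√I = √(σ₂,…,σ_n)` for the elementary symmetric polynomials. -/
theorem statement13 (k : Type) [Field k] (n : ℕ) (hn : 1 ≤ n)
    (I : Ideal (MvPolynomial (Fin n) k))
    (hI : I = Ideal.span {m : MvPolynomial (Fin n) k |
      ∃ i j : Fin n, i < j ∧ m = MvPolynomial.X i * MvPolynomial.X j}) :
    (∃ f : Fin (n - 1) → MvPolynomial (Fin n) k,
        I.radical = (Ideal.span (Set.range f)).radical) ∧
      I.radical = (Ideal.span {f : MvPolynomial (Fin n) k |
        ∃ j : ℕ, 2 ≤ j ∧ j ≤ n ∧ f = MvPolynomial.esymm (Fin n) k j}).radical := by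
  set σset : Set (MvPolynomial (Fin n) k) :=
    {f : MvPolynomial (Fin n) k | ∃ j : ℕ, 2 ≤ j ∧ j ≤ n ∧ f = MvPolynomial.esymm (Fin n) k j}
    with hσset
  have hJI : Ideal.span σset ≤ I := by
    rw [hI, Ideal.span_le]
    rintro g ⟨j, h2, hn', rfl⟩
    exact esymm_mem_edge k n j h2
  have hIJr : I ≤ (Ideal.span σset).radical := by
    rw [Ideal.radical_eq_sInf]
    apply le_sInf
    rintro P ⟨hle, hprime⟩
    rw [hI, Ideal.span_le]
    rintro g ⟨i, j, hij, rfl⟩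
    exact edge_mem_prime k n P hprime
      (fun m h2 hn' => hle (Ideal.subset_span ⟨m, h2, hn', rfl⟩)) i j hij
  have hsecond : I.radical = (Ideal.span σset).radical := by
    apply le_antisymm
    · have h := Ideal.radical_mono hIJr
      rwa [Ideal.radical_idem] at h
    · exact Ideal.radical_mono hJI
  refine ⟨⟨fun t => MvPolynomial.esymm (Fin n) k (t.1 + 2), ?_⟩, hsecond⟩
  have hrange : Set.range (fun t : Fin (n - 1) => MvPolynomial.esymm (Fin n) k (t.1 + 2))
      = σset := by
    ext g
    constructor
    · rintro ⟨t, rfl⟩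
      exact ⟨t.1 + 2, by omega, by have := t.2; omega, rfl⟩
    · rintro ⟨j, h2, hn', rfl⟩
      refine ⟨⟨j - 2, by omega⟩, ?_⟩
      simp only []
      congr 1
      omega
  rw [hsecond, hrange]
end

section
/- For n ≥ 3, the Fermat ideal J_n = (x(yⁿ − zⁿ), y(zⁿ − xⁿ), z(xⁿ − yⁿ)) in S = ℂ[x,y,z] is a radical ideal; explicitly, J_n equals the intersection of the n² + 3 prime ideals P_{ij} = (y − η^i z, z − η^j x) for 0 ≤ i,j ≤ n−1 (η a primitive n-th root of unity), together with (y,z), (x,z), and (x,y). -/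
/-!
Write `u = yⁿ - zⁿ`, `v = zⁿ - xⁿ`, `w = xⁿ - yⁿ`, so that `u + v + w = 0` and
`J_n = (x u, y v, z w) ⊆ (u, v)`. Since `u = ∏ᵢ (y - ηⁱ z)` and `v = ∏ⱼ (z - ηʲ x)`, the complete
intersection `(u, v)` is the intersection of the `n²` primes `P_{ij}`: intersecting first over `j`,
then over `i`, each new linear factor is a nonzerodivisor modulo the ideal it is intersected
with, because it does not vanish at the points of the corresponding lines.

It remains to cut `(u, v)` down to `J_n` with the three coordinate lines. If `a u + b v` lies in
`(y, z)`, `(x, z)` and `(x, y)`, primality of these ideals gives `b ∈ (y, z)`, `a ∈ (x, z)` and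
`a - b ∈ (x, y)`. Modulo `J_n` we have `x u ≡ y v ≡ 0` and `z u ≡ -z v`, hence also `y z u ≡ 0`,
and these congruences kill `a u + b v`. As an intersection of primes, `J_n` is radical.
-/

open MvPolynomial

theorem IsPrimitiveRoot.pow_fin_injective {M : Type*} [CommMonoid M] {ζ : M} {n : ℕ}
    (hζ : IsPrimitiveRoot ζ n) : Function.Injective fun k : Fin n => ζ ^ (k : ℕ) :=
  fun i k h => Fin.ext (hζ.pow_inj i.2 k.2 h)

theorem IsPrimitiveRoot.pow_sub_pow_eq_prod_fin {R : Type*} [CommRing R] [IsDomain R] {ζ : R}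
    {n : ℕ} (hζ : IsPrimitiveRoot ζ n) (hn : 0 < n) (x y : R) :
    x ^ n - y ^ n = ∏ k : Fin n, (x - ζ ^ (k : ℕ) * y) := by
  classical
  rw [hζ.pow_sub_pow_eq_prod_sub_mul x y hn, Polynomial.nthRootsFinset,
    hζ.nthRoots_eq (one_pow n), Multiset.toFinset_map, ← Finset.range_val,
    Finset.val_toFinset, Finset.prod_image (hζ.injOn_pow_mul one_ne_zero)]
  simp only [mul_one]
  exact (Fin.prod_univ_eq_prod_range (fun k => x - ζ ^ k * y) n).symm

namespace MvPolynomial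

variable {σ R : Type*} [CommRing R]

theorem sub_aeval_mem {I : Ideal (MvPolynomial σ R)} {e : σ → MvPolynomial σ R}
    (he : ∀ i, X i - e i ∈ I) (f : MvPolynomial σ R) : f - aeval e f ∈ I := by
  induction f using MvPolynomial.induction_on with
  | C a => simp
  | add p q hp hq => simpa [add_sub_add_comm] using add_mem hp hq
  | mul_X p i hp =>
    have : p * X i - aeval e (p * X i) = (p - aeval e p) * X i + aeval e p * (X i - e i) := by
      simp only [map_mul, aeval_X]
      ring
    rw [this]
    exact add_mem (Ideal.mul_mem_right _ _ hp) (Ideal.mul_mem_left _ _ (he i))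

theorem ker_aeval_eq_span {e : σ → MvPolynomial σ R} {G : Set (MvPolynomial σ R)}
    (hG : ∀ g ∈ G, aeval e g = 0) (he : ∀ i, X i - e i ∈ Ideal.span G) :
    RingHom.ker (aeval e) = Ideal.span G := by
  refine le_antisymm (fun f hf => ?_) (Ideal.span_le.2 hG)
  have := sub_aeval_mem he f
  rwa [RingHom.mem_ker.1 hf, sub_zero] at this

open scoped Classical in
theorem span_X_image_eq_ker (s : Set σ) :
    Ideal.span (X '' s : Set (MvPolynomial σ R)) =
      RingHom.ker (aeval fun i => if i ∈ s then 0 else (X i : MvPolynomial σ R)) := by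
  refine (ker_aeval_eq_span ?_ fun i => ?_).symm
  · rintro _ ⟨i, hi, rfl⟩
    simp [hi]
  · by_cases hi : i ∈ s
    · simpa [hi] using Ideal.subset_span (Set.mem_image_of_mem X hi)
    · simp [hi]

theorem isPrime_span_X_image [IsDomain R] (s : Set σ) :
    (Ideal.span (X '' s : Set (MvPolynomial σ R))).IsPrime := by
  classical
  rw [span_X_image_eq_ker]
  exact RingHom.ker_isPrime _

open scoped Classical in
theorem mem_span_X_pair_iff (i j : σ) (f : MvPolynomial σ R) :
    f ∈ Ideal.span {(X i : MvPolynomial σ R), X j} ↔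
      aeval (fun k => if k = i ∨ k = j then 0 else (X k : MvPolynomial σ R)) f = 0 := by
  rw [← Set.image_pair, span_X_image_eq_ker, RingHom.mem_ker]
  simp

theorem isPrime_span_X_pair [IsDomain R] (i j : σ) :
    (Ideal.span {(X i : MvPolynomial σ R), X j}).IsPrime :=
  Set.image_pair (X (R := R)) i j ▸ isPrime_span_X_image _

end MvPolynomial

namespace Ideal

variable {A : Type*} [CommRing A]

theorem IsPrime.mem_of_mul_add_mul_mem {P : Ideal A} (hP : P.IsPrime) {a b p q : A}
    (hp : p ∉ P) (hq : q ∈ P) (h : a * p + b * q ∈ P) : a ∈ P :=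
  (hP.mem_or_mem ((P.add_mem_iff_left (P.mul_mem_left b hq)).1 h)).resolve_right hp

theorem span_pair_inf_span_pair_le {L l g : A}
    (hL : ∀ a, L * a ∈ span {l, g} → a ∈ span {l, g}) :
    span {L, g} ⊓ span {l, g} ≤ span {L * l, g} := by
  rintro f ⟨hfL, hfl⟩
  obtain ⟨a, b, rfl⟩ := mem_span_pair.1 hfL
  have : L * a ∈ span {l, g} := by
    simpa [mul_comm] using sub_mem hfl (mul_mem_left _ b (subset_span (by simp) : g ∈ span {l, g}))
  obtain ⟨c, d, hcd⟩ := mem_span_pair.1 (hL a this)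
  exact mem_span_pair.2 ⟨c, d * L + b, by rw [← hcd]; ring⟩

theorem iInf_span_pair_le_span_prod_pair {ι : Type*} [Fintype ι] (l : ι → A) (g : A)
    (hl : ∀ i k, k ≠ i → ∀ a, l k * a ∈ span {l i, g} → a ∈ span {l i, g}) :
    ⨅ i, span {l i, g} ≤ span {∏ i, l i, g} := by
  classical
  suffices ∀ s : Finset ι, ⨅ i, span {l i, g} ≤ span {∏ i ∈ s, l i, g} from this _
  intro s
  induction s using Finset.induction_on with
  | empty => exact fun f _ => mem_span_pair.2 ⟨f, 0, by simp⟩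
  | insert k s hk ih =>
    rw [Finset.prod_insert hk, mul_comm]
    refine le_inf ih (iInf_le _ k) |>.trans (span_pair_inf_span_pair_le ?_)
    refine Finset.prod_induction _ (fun L => ∀ a, L * a ∈ span {l k, g} → a ∈ span {l k, g})
      (fun L M hL hM a h => hM a (hL _ (by rwa [← mul_assoc]))) (by simp) fun i hi => ?_
    exact hl k i (by rintro rfl; exact hk hi)

end Ideal

local notation "R₃" => MvPolynomial (Fin 3) ℂ

noncomputable def fermatIdeal (n : ℕ) : Ideal R₃ :=
  Ideal.span {X 0 * (X 1 ^ n - X 2 ^ n), X 1 * (X 2 ^ n - X 0 ^ n), X 2 * (X 0 ^ n - X 1 ^ n)}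

/-- The ideal of the line through the origin and the point `(1, a b, b)`. -/
noncomputable def lineIdeal (a b : ℂ) : Ideal R₃ := Ideal.span {X 1 - C a * X 2, X 2 - C b * X 0}

theorem lineIdeal_eq_ker (a b : ℂ) :
    lineIdeal a b = RingHom.ker (aeval ![X 0, C (a * b) * X 0, C b * X 0] : R₃ →ₐ[ℂ] R₃) := by
  refine (ker_aeval_eq_span ?_ fun i => ?_).symm
  · rintro _ (rfl | rfl) <;> simp [mul_comm, mul_left_comm]
  · fin_cases i
    · simp
    · refine Ideal.mem_span_pair.2 ⟨1, C a, ?_⟩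
      simp only [Fin.mk_one, Matrix.cons_val_one, Matrix.cons_val_zero, map_mul]
      ring
    · exact Ideal.mem_span_pair.2 ⟨0, 1, by simp⟩

theorem lineIdeal_isPrime (a b : ℂ) : (lineIdeal a b).IsPrime := by
  rw [lineIdeal_eq_ker]
  exact RingHom.ker_isPrime _

theorem mem_lineIdeal_of_mul_mem {a b : ℂ} {f g : R₃} (hf : eval ![1, a * b, b] f ≠ 0)
    (h : f * g ∈ lineIdeal a b) : g ∈ lineIdeal a b := by
  refine ((lineIdeal_isPrime a b).mem_or_mem h).resolve_left fun hmem => hf ?_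
  have : lineIdeal a b ≤ RingHom.ker (eval ![1, a * b, b]) :=
    Ideal.span_le.2 (by rintro _ (rfl | rfl) <;> simp [mul_comm])
  exact this hmem

section RootsOfUnity

variable {n : ℕ} {η : ℂ}

theorem prod_X_sub_C_mul_X (hη : IsPrimitiveRoot η n) (hn : 0 < n) (i j : Fin 3) :
    ∏ k : Fin n, (X i - C (η ^ (k : ℕ)) * X j : R₃) = X i ^ n - X j ^ n := by
  simp_rw [(hη.map_of_injective (C_injective (Fin 3) ℂ)).pow_sub_pow_eq_prod_fin hn, map_pow]

theorem X_sub_C_mul_X_dvd (hη : IsPrimitiveRoot η n) (hn : 0 < n) (i j : Fin 3) (k : Fin n) :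
    X i - C (η ^ (k : ℕ)) * X j ∣ (X i ^ n - X j ^ n : R₃) :=
  prod_X_sub_C_mul_X hη hn i j ▸ Finset.dvd_prod_of_mem _ (Finset.mem_univ k)

theorem iInf_lineIdeal (hη : IsPrimitiveRoot η n) (hn : 0 < n) (a : ℂ) :
    ⨅ j : Fin n, lineIdeal a (η ^ (j : ℕ)) =
      Ideal.span {X 1 - C a * X 2, X 2 ^ n - X 0 ^ n} := by
  have hswap : ∀ b, lineIdeal a b = Ideal.span {X 2 - C b * X 0, X 1 - C a * X 2} :=
    fun b => congrArg Ideal.span (Set.pair_comm _ _)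
  refine le_antisymm ?_ (le_iInf fun j => Ideal.span_le.2 ?_)
  · simp_rw [hswap]
    refine (Ideal.iInf_span_pair_le_span_prod_pair _ _ fun j k hkj c hc => ?_).trans ?_
    · rw [← hswap] at hc ⊢
      exact mem_lineIdeal_of_mul_mem
        (by simpa [sub_eq_zero] using (hη.pow_fin_injective.ne hkj).symm) hc
    · rw [prod_X_sub_C_mul_X hη hn, Set.pair_comm]
  · rintro _ (rfl | rfl)
    · exact Ideal.subset_span (by simp)
    · exact Ideal.mem_of_dvd _ (X_sub_C_mul_X_dvd hη hn 2 0 j) (Ideal.subset_span (by simp))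

theorem iInf_iInf_lineIdeal (hη : IsPrimitiveRoot η n) (hn : 0 < n) :
    ⨅ i : Fin n, ⨅ j : Fin n, lineIdeal (η ^ (i : ℕ)) (η ^ (j : ℕ)) =
      Ideal.span {X 1 ^ n - X 2 ^ n, X 2 ^ n - X 0 ^ n} := by
  simp_rw [iInf_lineIdeal hη hn]
  refine le_antisymm ?_ (le_iInf fun i => Ideal.span_le.2 ?_)
  · refine (Ideal.iInf_span_pair_le_span_prod_pair _ _ fun i k hki c hc => ?_).trans ?_
    · rw [← iInf_lineIdeal hη hn, Ideal.mem_iInf] at hc ⊢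
      refine fun j => mem_lineIdeal_of_mul_mem ?_ (hc j)
      simpa [sub_eq_zero, hη.ne_zero hn.ne'] using (hη.pow_fin_injective.ne hki).symm
    · rw [prod_X_sub_C_mul_X hη hn]
  · rintro _ (rfl | rfl)
    · exact Ideal.mem_of_dvd _ (X_sub_C_mul_X_dvd hη hn 1 2 i) (Ideal.subset_span (by simp))
    · exact Ideal.subset_span (by simp)

end RootsOfUnity

section FermatIdeal

variable {n : ℕ}

theorem fermatIdeal_le_span_pair :
    fermatIdeal n ≤ Ideal.span {X 1 ^ n - X 2 ^ n, X 2 ^ n - X 0 ^ n} := by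
  refine Ideal.span_le.2 ?_
  rintro _ (rfl | rfl | rfl)
  · exact Ideal.mem_span_pair.2 ⟨X 0, 0, by ring⟩
  · exact Ideal.mem_span_pair.2 ⟨0, X 1, by ring⟩
  · exact Ideal.mem_span_pair.2 ⟨-X 2, -X 2, by ring⟩

theorem fermatIdeal_le_span_X_pair (hn : n ≠ 0) {i j : Fin 3} (hij : i ≠ j) :
    fermatIdeal n ≤ Ideal.span {X i, X j} := by
  refine Ideal.span_le.2 ?_
  rintro _ (rfl | rfl | rfl) <;> fin_cases i <;> fin_cases j <;>
    simp_all [mem_span_X_pair_iff, zero_pow hn]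

theorem mul_add_mul_mem_fermatIdeal {a b : R₃} (ha : a ∈ Ideal.span {X 0, X 2})
    (hb : b ∈ Ideal.span {X 1, X 2}) (hab : a - b ∈ Ideal.span {X 0, X 1}) :
    a * (X 1 ^ n - X 2 ^ n) + b * (X 2 ^ n - X 0 ^ n) ∈ fermatIdeal n := by
  obtain ⟨a₀, a₂, rfl⟩ := Ideal.mem_span_pair.1 ha
  obtain ⟨b₁, b₂, rfl⟩ := Ideal.mem_span_pair.1 hb
  have hz : a₂ - b₂ ∈ Ideal.span {(X 0 : R₃), X 1} :=
    (isPrime_span_X_pair 0 1).mem_of_mul_add_mul_mem (b := 1) (p := X 2)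
      (q := a₀ * X 0 - b₁ * X 1) (by simp [mem_span_X_pair_iff, X_ne_zero])
      (Ideal.mem_span_pair.2 ⟨a₀, -b₁, by ring⟩) (by convert hab using 1; ring)
  obtain ⟨c, d, hcd⟩ := Ideal.mem_span_pair.1 hz
  have : (a₀ * X 0 + a₂ * X 2) * (X 1 ^ n - X 2 ^ n) + (b₁ * X 1 + b₂ * X 2) * (X 2 ^ n - X 0 ^ n) =
      (a₀ + c * X 2) * (X 0 * (X 1 ^ n - X 2 ^ n)) + (b₁ - d * X 2) * (X 1 * (X 2 ^ n - X 0 ^ n)) +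
        (-b₂ - d * X 1) * (X 2 * (X 0 ^ n - X 1 ^ n)) := by
    linear_combination (-(X 2) * (X 1 ^ n - X 2 ^ n)) * hcd
  rw [this]
  refine add_mem (add_mem ?_ ?_) ?_ <;> exact Ideal.mul_mem_left _ _ (Ideal.subset_span (by simp))

theorem inf_le_fermatIdeal (hn : n ≠ 0) :
    Ideal.span {X 1 ^ n - X 2 ^ n, X 2 ^ n - X 0 ^ n} ⊓ Ideal.span {X 1, X 2} ⊓
      Ideal.span {X 0, X 2} ⊓ Ideal.span {X 0, X 1} ≤ fermatIdeal n := by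
  intro f hf
  obtain ⟨⟨⟨hf, hyz⟩, hxz⟩, hxy⟩ := by simpa only [Submodule.mem_inf] using hf
  obtain ⟨a, b, rfl⟩ := Ideal.mem_span_pair.1 hf
  refine mul_add_mul_mem_fermatIdeal ?_ ?_ ?_
  · exact (isPrime_span_X_pair 0 2).mem_of_mul_add_mul_mem
      (by simp [mem_span_X_pair_iff, zero_pow hn, X_ne_zero])
      (by simp [mem_span_X_pair_iff, zero_pow hn]) hxz
  · exact (isPrime_span_X_pair 1 2).mem_of_mul_add_mul_mem
      (by simp [mem_span_X_pair_iff, zero_pow hn, X_ne_zero])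
      (by simp [mem_span_X_pair_iff, zero_pow hn]) (add_comm (a * _) _ ▸ hyz)
  · refine (isPrime_span_X_pair 0 1).mem_of_mul_add_mul_mem (b := b) (p := X 1 ^ n - X 2 ^ n)
      (q := X 1 ^ n - X 0 ^ n)
      (by simp [mem_span_X_pair_iff, zero_pow hn, X_ne_zero])
      (by simp [mem_span_X_pair_iff, zero_pow hn]) ?_
    convert hxy using 1
    ring

theorem fermatIdeal_eq_inf {η : ℂ} (hη : IsPrimitiveRoot η n) (hn : 0 < n) :
    fermatIdeal n = (⨅ i : Fin n, ⨅ j : Fin n, lineIdeal (η ^ (i : ℕ)) (η ^ (j : ℕ))) ⊓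
      Ideal.span {X 1, X 2} ⊓ Ideal.span {X 0, X 2} ⊓ Ideal.span {X 0, X 1} := by
  rw [iInf_iInf_lineIdeal hη hn]
  refine le_antisymm (le_inf (le_inf (le_inf fermatIdeal_le_span_pair ?_) ?_) ?_)
    (inf_le_fermatIdeal hn.ne') <;> exact fermatIdeal_le_span_X_pair hn.ne' (by decide)

end FermatIdeal

/-- For `n ≥ 3`, the Fermat ideal
`J_n = (x(yⁿ−zⁿ), y(zⁿ−xⁿ), z(xⁿ−yⁿ)) ⊆ ℂ[x,y,z]` is radical; explicitly it equals the
intersection of the `n² + 3` primes `P_{ij} = (y − ηⁱz, z − ηʲx)` (for `η` a primitive `n`-th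
root of unity) together with `(y,z)`, `(x,z)` and `(x,y)`. -/
theorem statement14 (n : ℕ) (hn : 3 ≤ n) (η : ℂ) (hη : IsPrimitiveRoot η n)
    (J : Ideal (MvPolynomial (Fin 3) ℂ))
    (hJ : J = Ideal.span
      {X 0 * ((X 1 : MvPolynomial (Fin 3) ℂ) ^ n - X 2 ^ n),
        X 1 * (X 2 ^ n - X 0 ^ n), X 2 * (X 0 ^ n - X 1 ^ n)}) :
    J.radical = J ∧
      J = (⨅ i : Fin n, ⨅ j : Fin n,
            Ideal.span {(X 1 : MvPolynomial (Fin 3) ℂ) - C (η ^ (i : ℕ)) * X 2,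
              X 2 - C (η ^ (j : ℕ)) * X 0}) ⊓
          Ideal.span {(X 1 : MvPolynomial (Fin 3) ℂ), X 2} ⊓
          Ideal.span {(X 0 : MvPolynomial (Fin 3) ℂ), X 2} ⊓
          Ideal.span {(X 0 : MvPolynomial (Fin 3) ℂ), X 1} := by
  have hJ_eq := hJ.trans (fermatIdeal_eq_inf hη (by omega))
  refine ⟨?_, hJ_eq⟩
  rw [hJ_eq]
  refine Ideal.IsRadical.radical <| .inf (.inf (.inf ?_ ?_) ?_) ?_
  · exact Ideal.isRadical_iInf _ fun i =>
      Ideal.isRadical_iInf _ fun j => (lineIdeal_isPrime _ _).isRadical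
  all_goals exact (isPrime_span_X_pair _ _).isRadical
end
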